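/- arXiv:1906.12091 — 2 statements merged into one kernel-verified Lean document; each statement's English description precedes it below -/
import Mathlib

section
/- Let λ > 0. For the generalized CF objective F with the element-wise (Hadamard) product interaction, no point (U, V, w) in which U and V are not both zero is a global minimizer of F: for any such point there exists another point with a strictly smaller objective value (namely (βU, βV, β⁻²w) for any β ∈ (0,1)). -/
open Finset

/-- Generalized CF objective with the element-wise (Hadamard) product interaction:
`F(U,V,w) = Σ_{(i,j)∈Ω} ℓ(⟨w, u_i ⊙ v_j⟩, O_{ij}) + (λ/2)Σ_i ‖u_i‖² + (λ/2)Σ_j ‖v_j‖²`. -/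
noncomputable def cfObjHadamard {k m n : ℕ} (lam : ℝ) (Ω : Finset (Fin m × Fin n))
    (O : Fin m × Fin n → ℝ) (ℓ : ℝ × ℝ → ℝ)
    (U : Fin m → Fin k → ℝ) (V : Fin n → Fin k → ℝ) (w : Fin k → ℝ) : ℝ :=
  (∑ p ∈ Ω, ℓ (∑ l, w l * (U p.1 l * V p.2 l), O p))
    + lam / 2 * ∑ i, ∑ l, (U i l) ^ 2
    + lam / 2 * ∑ j, ∑ l, (V j l) ^ 2

/-- For `λ > 0`, no point `(U, V, w)` with `U` and `V` not both zero is a global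
minimizer of the generalized CF objective with the Hadamard-product interaction:
there is another point with strictly smaller objective value. -/
theorem no_nonzero_global_minimizer_hadamard {k m n : ℕ} (lam : ℝ) (hlam : 0 < lam)
    (Ω : Finset (Fin m × Fin n)) (O : Fin m × Fin n → ℝ) (ℓ : ℝ × ℝ → ℝ) :
    ∀ (U : Fin m → Fin k → ℝ) (V : Fin n → Fin k → ℝ) (w : Fin k → ℝ),
      ¬ (U = 0 ∧ V = 0) →
      ∃ (U' : Fin m → Fin k → ℝ) (V' : Fin n → Fin k → ℝ) (w' : Fin k → ℝ),
        cfObjHadamard lam Ω O ℓ U' V' w' < cfObjHadamard lam Ω O ℓ U V w := by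
  intro U V w h
  refine ⟨fun i l => (1/2) * U i l, fun j l => (1/2) * V j l, fun l => 4 * w l, ?_⟩
  unfold cfObjHadamard
  have hloss : (∑ p ∈ Ω, ℓ (∑ l, (4 * w l) * ((1/2 * U p.1 l) * (1/2 * V p.2 l)), O p))
      = ∑ p ∈ Ω, ℓ (∑ l, w l * (U p.1 l * V p.2 l), O p) := by
    refine Finset.sum_congr rfl fun p _ => ?_
    congr 1
    exact congrArg (·, O p) (Finset.sum_congr rfl fun l _ => by ring)
  rw [hloss]
  have hA : ∀ i, ∑ l, (1/2 * U i l) ^ 2 = 1/4 * ∑ l, (U i l)^2 := by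
    intro i; rw [Finset.mul_sum]; exact Finset.sum_congr rfl fun l _ => by ring
  have hB : ∀ j, ∑ l, (1/2 * V j l) ^ 2 = 1/4 * ∑ l, (V j l)^2 := by
    intro j; rw [Finset.mul_sum]; exact Finset.sum_congr rfl fun l _ => by ring
  simp only [hA, hB, ← Finset.mul_sum]
  set A := ∑ i, ∑ l, (U i l)^2 with hAdef
  set B := ∑ j, ∑ l, (V j l)^2 with hBdef
  have hAnn : 0 ≤ A := Finset.sum_nonneg fun i _ => Finset.sum_nonneg fun l _ => sq_nonneg _
  have hBnn : 0 ≤ B := Finset.sum_nonneg fun j _ => Finset.sum_nonneg fun l _ => sq_nonneg _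
  have hpos : 0 < A + B := by
    rcases not_and_or.mp h with hU | hV
    · obtain ⟨i, hi⟩ := Function.ne_iff.mp hU
      obtain ⟨l, hl⟩ := Function.ne_iff.mp hi
      have : 0 < A := by
        refine Finset.sum_pos' (fun i _ => Finset.sum_nonneg fun l _ => sq_nonneg _)
          ⟨i, Finset.mem_univ i, Finset.sum_pos' (fun l _ => sq_nonneg _)
            ⟨l, Finset.mem_univ l, sq_pos_of_ne_zero hl⟩⟩
      linarith
    · obtain ⟨j, hj⟩ := Function.ne_iff.mp hV
      obtain ⟨l, hl⟩ := Function.ne_iff.mp hj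
      have : 0 < B := by
        refine Finset.sum_pos' (fun j _ => Finset.sum_nonneg fun l _ => sq_nonneg _)
          ⟨j, Finset.mem_univ j, Finset.sum_pos' (fun l _ => sq_nonneg _)
            ⟨l, Finset.mem_univ l, sq_pos_of_ne_zero hl⟩⟩
      linarith
  nlinarith [mul_pos hlam hpos]
end

section
/- Along the rescaling path for the element-wise product interaction, the objective value strictly decreases as β decreases: let λ > 0 and let (U, V, w) be such that U and V are not both zero. Then for all 0 < β' < β ≤ 1, F(β'U, β'V, (β')⁻²w) < F(βU, βV, β⁻²w), and consequently the infimum of F over the path {(βU, βV, β⁻²w) : β ∈ (0,1]} equals Σ_{(i,j)∈Ω} ℓ(⟨w, u_i ⊙ v_j⟩, O_{ij}) and is not attained at any β ∈ (0,1]. -/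
open Finset

/-- Along the rescaling path `β ↦ (βU, βV, β⁻²w)` for the Hadamard-product interaction
with `λ > 0` and `U, V` not both zero: the objective strictly decreases as `β` decreases
on `(0,1]`; consequently the infimum of `F` over the path equals the data-fitting term
`Σ_{(i,j)∈Ω} ℓ(⟨w, u_i ⊙ v_j⟩, O_{ij})` and is not attained at any `β ∈ (0,1]`. -/
theorem rescaling_path_hadamard {k m n : ℕ} (lam : ℝ) (hlam : 0 < lam)
    (Ω : Finset (Fin m × Fin n)) (O : Fin m × Fin n → ℝ) (ℓ : ℝ × ℝ → ℝ)
    (U : Fin m → Fin k → ℝ) (V : Fin n → Fin k → ℝ) (w : Fin k → ℝ)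
    (hUV : ¬ (U = 0 ∧ V = 0)) :
    (∀ β β' : ℝ, 0 < β' → β' < β → β ≤ 1 →
      cfObjHadamard lam Ω O ℓ (fun i l => β' * U i l) (fun j l => β' * V j l)
          (fun l => (β' ^ 2)⁻¹ * w l)
        < cfObjHadamard lam Ω O ℓ (fun i l => β * U i l) (fun j l => β * V j l)
            (fun l => (β ^ 2)⁻¹ * w l)) ∧
    sInf ((fun β : ℝ =>
        cfObjHadamard lam Ω O ℓ (fun i l => β * U i l) (fun j l => β * V j l)
          (fun l => (β ^ 2)⁻¹ * w l)) '' Set.Ioc 0 1)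
      = ∑ p ∈ Ω, ℓ (∑ l, w l * (U p.1 l * V p.2 l), O p) ∧
    ∀ β ∈ Set.Ioc (0 : ℝ) 1,
      cfObjHadamard lam Ω O ℓ (fun i l => β * U i l) (fun j l => β * V j l)
          (fun l => (β ^ 2)⁻¹ * w l)
        ≠ ∑ p ∈ Ω, ℓ (∑ l, w l * (U p.1 l * V p.2 l), O p) := by
  set L := ∑ p ∈ Ω, ℓ (∑ l, w l * (U p.1 l * V p.2 l), O p) with hLdef
  set A := ∑ i, ∑ l, (U i l) ^ 2 with hAdef
  set B := ∑ j, ∑ l, (V j l) ^ 2 with hBdef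
  have hA0 : 0 ≤ A := Finset.sum_nonneg fun i _ => Finset.sum_nonneg fun l _ => sq_nonneg _
  have hB0 : 0 ≤ B := Finset.sum_nonneg fun j _ => Finset.sum_nonneg fun l _ => sq_nonneg _
  have hS0 : 0 < A + B := by
    rcases (lt_or_eq_of_le (add_nonneg hA0 hB0)).symm with h | h
    · exfalso
      have hA : A = 0 := le_antisymm (by linarith) hA0
      have hB : B = 0 := le_antisymm (by linarith) hB0
      apply hUV
      constructor
      · funext i l
        have h1 := (Finset.sum_eq_zero_iff_of_nonneg
          (fun i _ => Finset.sum_nonneg fun l _ => sq_nonneg (U i l))).mp hA i (Finset.mem_univ _)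
        have h2 := (Finset.sum_eq_zero_iff_of_nonneg
          (fun l _ => sq_nonneg (U i l))).mp h1 l (Finset.mem_univ _)
        have := pow_eq_zero_iff (n := 2) (by norm_num) |>.mp h2
        simpa using this
      · funext j l
        have h1 := (Finset.sum_eq_zero_iff_of_nonneg
          (fun j _ => Finset.sum_nonneg fun l _ => sq_nonneg (V j l))).mp hB j (Finset.mem_univ _)
        have h2 := (Finset.sum_eq_zero_iff_of_nonneg
          (fun l _ => sq_nonneg (V j l))).mp h1 l (Finset.mem_univ _)
        have := pow_eq_zero_iff (n := 2) (by norm_num) |>.mp h2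
        simpa using this
    · exact h
  set c := lam / 2 * (A + B) with hcdef
  have hc0 : 0 < c := by positivity
  have key : ∀ β : ℝ, β ≠ 0 →
      cfObjHadamard lam Ω O ℓ (fun i l => β * U i l) (fun j l => β * V j l)
        (fun l => (β ^ 2)⁻¹ * w l) = L + c * β ^ 2 := by
    intro β hβ
    unfold cfObjHadamard
    have h1 : ∀ p : Fin m × Fin n,
        (∑ l, (β ^ 2)⁻¹ * w l * (β * U p.1 l * (β * V p.2 l)))
          = ∑ l, w l * (U p.1 l * V p.2 l) := by
      intro p
      refine Finset.sum_congr rfl fun l _ => ?_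
      field_simp
    simp only [h1, mul_pow, ← Finset.mul_sum]
    rw [hLdef, hcdef, hAdef, hBdef]
    ring
  have hmono : ∀ β β' : ℝ, 0 < β' → β' < β → β ≤ 1 →
      cfObjHadamard lam Ω O ℓ (fun i l => β' * U i l) (fun j l => β' * V j l)
          (fun l => (β' ^ 2)⁻¹ * w l)
        < cfObjHadamard lam Ω O ℓ (fun i l => β * U i l) (fun j l => β * V j l)
            (fun l => (β ^ 2)⁻¹ * w l) := by
    intro β β' hβ' hlt _
    rw [key β' hβ'.ne', key β (by linarith)]
    have : β' ^ 2 < β ^ 2 := by nlinarith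
    nlinarith
  refine ⟨hmono, ?_, ?_⟩
  · -- sInf
    have himg : ((fun β : ℝ =>
        cfObjHadamard lam Ω O ℓ (fun i l => β * U i l) (fun j l => β * V j l)
          (fun l => (β ^ 2)⁻¹ * w l)) '' Set.Ioc 0 1)
        = (fun β : ℝ => L + c * β ^ 2) '' Set.Ioc 0 1 := by
      apply Set.image_congr
      intro β hβ
      exact key β hβ.1.ne'
    rw [himg]
    have hne : ((fun β : ℝ => L + c * β ^ 2) '' Set.Ioc 0 1).Nonempty :=
      ⟨L + c * 1 ^ 2, ⟨1, by norm_num⟩⟩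
    have hbdd : BddBelow ((fun β : ℝ => L + c * β ^ 2) '' Set.Ioc 0 1) := by
      refine ⟨L, ?_⟩
      rintro x ⟨β, hβ, rfl⟩
      show L ≤ L + c * β ^ 2
      nlinarith [mul_pos hc0 (pow_pos hβ.1 2)]
    apply le_antisymm
    · rw [Real.sInf_le_iff hbdd hne]
      intro ε hε
      set β := min 1 (Real.sqrt (ε / (2 * c))) with hβdef
      have hβpos : 0 < β := lt_min one_pos (Real.sqrt_pos.mpr (by positivity))
      refine ⟨L + c * β ^ 2, ⟨β, ⟨hβpos, min_le_left _ _⟩, rfl⟩, ?_⟩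
      have hβle : β ≤ Real.sqrt (ε / (2 * c)) := min_le_right _ _
      have hsq : β ^ 2 ≤ ε / (2 * c) := by
        have := pow_le_pow_left₀ hβpos.le hβle 2
        rwa [Real.sq_sqrt (by positivity)] at this
      have h' : β ^ 2 * (2 * c) ≤ ε := (le_div_iff₀ (by positivity)).mp hsq
      nlinarith [h']
    · apply le_csInf hne
      rintro x ⟨β, hβ, rfl⟩
      show L ≤ L + c * β ^ 2
      nlinarith [mul_pos hc0 (pow_pos hβ.1 2)]
  · intro β hβ
    rw [key β hβ.1.ne']
    have hpos : 0 < c * β ^ 2 := mul_pos hc0 (pow_pos hβ.1 2)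
    intro h
    linarith
end
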